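/- Let {w_x^±}_{x∈D} be a feasible solution to the state-reflection problem {(σ_x⁺, σ_x⁻, O_x)}_{x∈D}. Let A be any subspace of V ⊕ H with span{σ_x⁺ ⊕ w_x⁺ : x ∈ D} ⊆ A ⊆ (span{σ_y⁻ ⊕ (−w_y⁻) : y ∈ D})^⊥, and let U := 2Π_A − I, where Π_A is the orthogonal projection onto A. Then for every x ∈ D, the unitary U ∘ (I_V ⊕ O_x) fixes σ_x⁺ ⊕ w_x⁺ and maps σ_x⁻ ⊕ w_x⁻ to (−σ_x⁻) ⊕ w_x⁻; that is, U(I_V ⊕ O_x) transduces σ_x⁺ to σ_x⁺ with catalyst w_x⁺ and transduces σ_x⁻ to −σ_x⁻ with catalyst w_x⁻. -/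

import Mathlib

open scoped InnerProductSpace

variable {V : Type*} [NormedAddCommGroup V] [InnerProductSpace ℂ V]
variable {H : Type*} [NormedAddCommGroup H] [InnerProductSpace ℂ H]

/-- The operator `I_V ⊕ O` on the Hilbert-space direct sum `V ⊕ H`. -/
noncomputable def directSumOp (O : H →ₗ[ℂ] H) :
    WithLp 2 (V × H) →ₗ[ℂ] WithLp 2 (V × H) :=
  (WithLp.linearEquiv 2 ℂ (V × H)).symm.toLinearMap ∘ₗ
    (LinearMap.id.prodMap O) ∘ₗ (WithLp.linearEquiv 2 ℂ (V × H)).toLinearMap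

/-!
`I_V ⊕ O_x` fixes `σ_x⁺ ⊕ w_x⁺ ∈ A` and sends `σ_x⁻ ⊕ w_x⁻` to `σ_x⁻ ⊕ (-w_x⁻) ∈ Aᗮ`, so the
reflection through `A` fixes the first and negates the second.
-/

theorem directSumOp_equiv_symm_apply (O : H →ₗ[ℂ] H) (a : V) (b : H) :
    directSumOp O ((WithLp.equiv 2 (V × H)).symm (a, b)) =
      (WithLp.equiv 2 (V × H)).symm (a, O b) :=
  rfl

theorem Submodule.mem_orthogonal_of_le_orthogonal_span {𝕜 E : Type*} [RCLike 𝕜]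
    [NormedAddCommGroup E] [InnerProductSpace 𝕜 E] {K : Submodule 𝕜 E} {s : Set E}
    (hK : K ≤ (span 𝕜 s)ᗮ) {v : E} (hv : v ∈ s) : v ∈ Kᗮ :=
  orthogonal_le hK (le_orthogonal_orthogonal _ (subset_span hv))

theorem transducer_from_state_reflection_general
    {D : Type*} [FiniteDimensional ℂ V] [FiniteDimensional ℂ H]
    (σp σm : D → V) (O : D → (H →ₗ[ℂ] H))
    (wp wm : D → H)
    (hwp : ∀ x, O x (wp x) = wp x)
    (hwm : ∀ x, O x (wm x) = -wm x)
    (A : Submodule ℂ (WithLp 2 (V × H)))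
    (hAlower : ∀ x : D, (WithLp.equiv 2 (V × H)).symm (σp x, wp x) ∈ A)
    (hAupper : A ≤ (Submodule.span ℂ
      (Set.range fun y : D => (WithLp.equiv 2 (V × H)).symm (σm y, -wm y)))ᗮ) :
    ∀ x : D,
      Submodule.reflection A (directSumOp (O x) ((WithLp.equiv 2 (V × H)).symm (σp x, wp x))) =
        (WithLp.equiv 2 (V × H)).symm (σp x, wp x) ∧
      Submodule.reflection A (directSumOp (O x) ((WithLp.equiv 2 (V × H)).symm (σm x, wm x))) =
        (WithLp.equiv 2 (V × H)).symm (-σm x, wm x) := by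
  intro x
  have hminus_perp : (WithLp.equiv 2 (V × H)).symm (σm x, -wm x) ∈ Aᗮ :=
    Submodule.mem_orthogonal_of_le_orthogonal_span hAupper ⟨x, rfl⟩
  refine ⟨?_, ?_⟩
  · rw [directSumOp_equiv_symm_apply, hwp]
    exact Submodule.reflection_mem_subspace_eq_self (hAlower x)
  · rw [directSumOp_equiv_symm_apply, hwm,
      Submodule.reflection_mem_subspace_orthogonalComplement_eq_neg hminus_perp]
    exact (WithLp.equiv 2 (V × H)).injective (by simp)

/-- Given a feasible solution `{w_x^±}` to a state-reflection problem
`{(σ_x⁺, σ_x⁻, O_x)}` and a subspace `A` of `V ⊕ H` with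
`span{σ_x⁺ ⊕ w_x⁺} ⊆ A ⊆ (span{σ_y⁻ ⊕ (-w_y⁻)})ᗮ`, the unitary `U ∘ (I_V ⊕ O_x)` with
`U = 2Π_A - I` (the reflection through `A`) fixes `σ_x⁺ ⊕ w_x⁺` and maps `σ_x⁻ ⊕ w_x⁻` to
`(-σ_x⁻) ⊕ w_x⁻`. -/
theorem transducer_from_state_reflection
    {D : Type*} [Fintype D] [FiniteDimensional ℂ V] [FiniteDimensional ℂ H]
    (σp σm : D → V) (O : D → (H →ₗ[ℂ] H))
    (hOunitary : ∀ x (u v : H), ⟪O x u, O x v⟫_ℂ = ⟪u, v⟫_ℂ)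
    (hOinv : ∀ x (v : H), O x (O x v) = v)
    (wp wm : D → H)
    (hwp : ∀ x, O x (wp x) = wp x)
    (hwm : ∀ x, O x (wm x) = -wm x)
    (hfeas : ∀ x y, ⟪wp x, wm y⟫_ℂ = ⟪σp x, σm y⟫_ℂ)
    (A : Submodule ℂ (WithLp 2 (V × H)))
    (hAlower : ∀ x : D, (WithLp.equiv 2 (V × H)).symm (σp x, wp x) ∈ A)
    (hAupper : A ≤ (Submodule.span ℂ
      (Set.range fun y : D => (WithLp.equiv 2 (V × H)).symm (σm y, -wm y)))ᗮ) :
    ∀ x : D,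
      Submodule.reflection A (directSumOp (O x) ((WithLp.equiv 2 (V × H)).symm (σp x, wp x))) =
        (WithLp.equiv 2 (V × H)).symm (σp x, wp x) ∧
      Submodule.reflection A (directSumOp (O x) ((WithLp.equiv 2 (V × H)).symm (σm x, wm x))) =
        (WithLp.equiv 2 (V × H)).symm (-σm x, wm x) :=
  transducer_from_state_reflection_general σp σm O wp wm hwp hwm A hAlower hAupper
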